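/- If two reversible kernels P and M on possibly different augmentations agree on functions not depending on the extra coordinate — specifically if g(θ,u,v) = g(θ,v) does not depend on u and P^k g(θ,u,v) = M^k g(θ,v) for all k ≥ 1 — then the asymptotic variances coincide: var(P, g) = var(M, g). -/

import Mathlib

open MeasureTheory ProbabilityTheory Filter
open scoped ENNReal

section Defs
variable {X : Type*} [MeasurableSpace X]

/-- The Markov operator `K f (x) = ∫ f(y) K(x, dy)`. -/
noncomputable def kOp (K : Kernel X X) (f : X → ℝ) : X → ℝ :=
  fun x => ∫ y, f y ∂(K x)

/-- Iterates of the Markov operator: `kIter K n f = Kⁿ f`. -/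
noncomputable def kIter (K : Kernel X X) : ℕ → (X → ℝ) → (X → ℝ)
  | 0, f => f
  | n + 1, f => kOp K (kIter K n f)

/-- Iterates of a kernel, as kernels. -/
noncomputable def kIterK (K : Kernel X X) : ℕ → Kernel X X
  | 0 => Kernel.id
  | n + 1 => K.comp (kIterK K n)

/-- Detailed balance / reversibility of `K` with respect to `μ`. -/
def Reversible (μ : Measure X) (K : Kernel X X) : Prop :=
  μ.compProd K = (μ.compProd K).map Prod.swap

/-- Invariance of `μ` for `K`. -/
def Invariant (μ : Measure X) (K : Kernel X X) : Prop :=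
  μ.bind (fun x => K x) = μ

/-- Harris ergodicity: invariance, ψ-irreducibility, and triviality of bounded
harmonic functions (a standing proxy for Harris recurrence). -/
def HarrisErgodic (μ : Measure X) (K : Kernel X X) : Prop :=
  Invariant μ K ∧
  (∃ ψ : Measure X, ψ ≠ 0 ∧ ∀ A : Set X, MeasurableSet A → 0 < ψ A →
    ∀ x : X, ∃ n : ℕ, 0 < kIterK K n x A) ∧
  (∀ f : X → ℝ, Measurable f → (∃ C, ∀ x, |f x| ≤ C) → kOp K f = f →
    ∃ c : ℝ, f =ᵐ[μ] fun _ => c)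

/-- Centering of `f` with respect to `μ`. -/
noncomputable def center (μ : Measure X) (f : X → ℝ) : X → ℝ :=
  fun x => f x - ∫ y, f y ∂μ

/-- `n⁻¹ E[(∑_{k<n} (f(X_k) - μ(f)))²]` for the stationary chain with kernel `K`,
expanded via stationarity into covariances `∫ f̄ · K^{|i-j|} f̄ dμ`. -/
noncomputable def avarSeq (μ : Measure X) (K : Kernel X X) (f : X → ℝ) (n : ℕ) : ℝ :=
  (n : ℝ)⁻¹ * ∑ i ∈ Finset.range n, ∑ j ∈ Finset.range n,
    ∫ x, center μ f x * kIter K (max i j - min i j) (center μ f) x ∂μ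

/-- `v` is the asymptotic variance of `f` for the stationary chain with kernel `K`. -/
def IsAvar (μ : Measure X) (K : Kernel X X) (f : X → ℝ) (v : ℝ) : Prop :=
  Tendsto (avarSeq μ K f) atTop (nhds v)

/-- The variance `var_μ(f)`. -/
noncomputable def varOf (μ : Measure X) (f : X → ℝ) : ℝ :=
  ∫ x, f x ^ 2 ∂μ - (∫ x, f x ∂μ) ^ 2

/-- The Dirichlet form `E_K(f) = ⟨f, (I - K) f⟩_μ`. -/
noncomputable def dirichlet (μ : Measure X) (K : Kernel X X) (f : X → ℝ) : ℝ :=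
  ∫ x, f x * (f x - kOp K f x) ∂μ

end Defs

/-!
The sequence `avarSeq` sees the chain only through its autocovariances `∫ f̄ · Kⁿ f̄ dμ`.
Invariance of `μ` makes `f ∈ L¹(μ)` integrable for `K x` at `μ`-a.e. `x`, so the centering
constant can be pulled out of `Kⁿ` almost everywhere, and the autocovariance becomes
`∫ (f - μ f) (Kⁿ f - μ f) dμ`. For `f = g ∘ φ` with `Pⁿ (g ∘ φ) = (Mⁿ g) ∘ φ` this is an integral
of a function of `φ`, and the change of variables along `φ` turns it into the autocovariance of
`g` under `M` and the image measure.
-/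

section Autocovariance

variable {X : Type*} [MeasurableSpace X] {μ : Measure X} {K : Kernel X X}

lemma Reversible.invariant [SFinite μ] [IsMarkovKernel K] (h : Reversible μ K) :
    Invariant μ K :=
  calc K ∘ₘ μ = (μ ⊗ₘ K).snd := (Measure.snd_compProd μ K).symm
    _ = ((μ ⊗ₘ K).map Prod.swap).snd := by rw [← h]
    _ = μ := by rw [Measure.snd_map_swap, Measure.fst_compProd]

lemma Invariant.ae_ae_of_ae (h : Invariant μ K) {p : X → Prop} (hp : ∀ᵐ y ∂μ, p y) :
    ∀ᵐ x ∂μ, ∀ᵐ y ∂K x, p y := by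
  rw [← h] at hp
  exact Measure.ae_ae_of_ae_comp hp

lemma Invariant.ae_integrable (h : Invariant μ K) {f : X → ℝ} (hf : Integrable f μ) :
    ∀ᵐ x ∂μ, Integrable f (K x) := by
  rw [← h] at hf
  exact Measure.ae_integrable_of_integrable_comp hf

lemma Invariant.integrable_kOp (h : Invariant μ K) {f : X → ℝ} (hf : Integrable f μ) :
    Integrable (kOp K f) μ := by
  rw [← h, Measure.comp_eq_comp_const_apply] at hf
  have hK := hf.integral_comp
  rw [Kernel.const_apply] at hK
  exact hK

lemma Invariant.integrable_kIter (h : Invariant μ K) {f : X → ℝ} (hf : Integrable f μ) :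
    ∀ n, Integrable (kIter K n f) μ
  | 0 => hf
  | n + 1 => h.integrable_kOp (h.integrable_kIter hf n)

lemma Invariant.kOp_congr_ae (h : Invariant μ K) {f g : X → ℝ} (hfg : f =ᵐ[μ] g) :
    kOp K f =ᵐ[μ] kOp K g :=
  (h.ae_ae_of_ae hfg).mono fun _ hx => integral_congr_ae hx

lemma Invariant.kOp_sub_const [IsMarkovKernel K] (h : Invariant μ K) {f : X → ℝ}
    (hf : Integrable f μ) (c : ℝ) :
    kOp K (fun x => f x - c) =ᵐ[μ] fun x => kOp K f x - c := by
  filter_upwards [h.ae_integrable hf] with x hx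
  simp [kOp, integral_sub hx (integrable_const c)]

lemma Invariant.kIter_sub_const [IsMarkovKernel K] (h : Invariant μ K) {f : X → ℝ}
    (hf : Integrable f μ) (c : ℝ) :
    ∀ n, kIter K n (fun x => f x - c) =ᵐ[μ] fun x => kIter K n f x - c
  | 0 => .rfl
  | n + 1 => (h.kOp_congr_ae (h.kIter_sub_const hf c n)).trans
      (h.kOp_sub_const (h.integrable_kIter hf n) c)

noncomputable def autocov (μ : Measure X) (K : Kernel X X) (f : X → ℝ) (n : ℕ) : ℝ :=
  ∫ x, center μ f x * kIter K n (center μ f) x ∂μ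

lemma avarSeq_congr {Y : Type*} [MeasurableSpace Y] {ν : Measure Y} {L : Kernel Y Y}
    {f : X → ℝ} {g : Y → ℝ} (h : autocov μ K f = autocov ν L g) :
    avarSeq μ K f = avarSeq ν L g := by
  funext n
  exact congrArg (fun a : ℕ → ℝ =>
    (n : ℝ)⁻¹ * ∑ i ∈ Finset.range n, ∑ j ∈ Finset.range n, a (max i j - min i j)) h

lemma Invariant.autocov_eq [IsMarkovKernel K] (h : Invariant μ K) {f : X → ℝ}
    (hf : Integrable f μ) (n : ℕ) :
    autocov μ K f n = ∫ x, (f x - ∫ y, f y ∂μ) * (kIter K n f x - ∫ y, f y ∂μ) ∂μ :=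
  integral_congr_ae <| (h.kIter_sub_const hf (∫ y, f y ∂μ) n).mono fun x hx =>
    congrArg (center μ f x * ·) hx

lemma autocov_comp_eq_autocov_map {Y : Type*} [MeasurableSpace Y] {ν : Measure Y}
    {P : Kernel Y Y} [IsMarkovKernel P] [IsMarkovKernel K] {φ : Y → X} (hφ : Measurable φ)
    (hP : Invariant ν P) (hK : Invariant (ν.map φ) K) {g : X → ℝ}
    (hg : Integrable g (ν.map φ))
    (hPK : ∀ n y, kIter P n (fun y => g (φ y)) y = kIter K n g (φ y)) :
    autocov ν P (fun y => g (φ y)) = autocov (ν.map φ) K g := by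
  have hgφ : Integrable (fun y => g (φ y)) ν := hg.comp_measurable hφ
  have hmean : ∫ y, g (φ y) ∂ν = ∫ x, g x ∂(ν.map φ) :=
    (integral_map hφ.aemeasurable hg.1).symm
  funext n
  have hPK' : kIter P n (fun y => g (φ y)) = fun y => kIter K n g (φ y) := funext (hPK n)
  rw [hP.autocov_eq hgφ, hK.autocov_eq hg, hPK', hmean]
  exact (integral_map hφ.aemeasurable <| (hg.1.sub aestronglyMeasurable_const).mul
    ((hK.integrable_kIter hg n).1.sub aestronglyMeasurable_const)).symm

end Autocovariance

theorem asymptotic_variance_collapse_general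
    {T U V : Type*} [MeasurableSpace T] [MeasurableSpace U] [MeasurableSpace V]
    (π1 : Measure (T × U × V)) [IsProbabilityMeasure π1]
    (P : Kernel (T × U × V) (T × U × V)) [IsMarkovKernel P]
    (hPrev : Reversible π1 P)
    (π2 : Measure (T × V))
    (hπ2 : π2 = π1.map (fun x => (x.1, x.2.2)))
    (M : Kernel (T × V) (T × V)) [IsMarkovKernel M]
    (hMrev : Reversible π2 M)
    (g : T × V → ℝ) (hg : MemLp g 2 π2)
    (hiter : ∀ k : ℕ, 1 ≤ k → ∀ x : T × U × V,
      kIter P k (fun z => g (z.1, z.2.2)) x = kIter M k g (x.1, x.2.2)) :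
    ∀ v : ℝ, IsAvar π1 P (fun z => g (z.1, z.2.2)) v ↔ IsAvar π2 M g v := by
  intro v
  have hproj : Measurable fun x : T × U × V => (x.1, x.2.2) := by fun_prop
  subst hπ2
  have := Measure.isProbabilityMeasure_map (μ := π1) hproj.aemeasurable
  have hPM : ∀ k x, kIter P k (fun z => g (z.1, z.2.2)) x = kIter M k g (x.1, x.2.2)
    | 0, _ => rfl
    | k + 1, x => hiter (k + 1) k.succ_pos x
  have hseq : avarSeq π1 P (fun z => g (z.1, z.2.2)) = avarSeq (π1.map _) M g :=
    avarSeq_congr <| autocov_comp_eq_autocov_map hproj hPrev.invariant hMrev.invariant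
      (hg.integrable one_le_two) hPM
  rw [IsAvar, IsAvar, hseq]

/-- If a π-reversible Harris ergodic kernel `P` on `T×U×V` and a
kernel `M` on `T×V` (reversible for the marginal of `π`) satisfy
`P^k g(θ,u,v) = M^k g(θ,v)` for all `k ≥ 1`, for a function `g` not depending on `u`,
then the asymptotic variances coincide: `var(P, g) = var(M, g)`. -/
theorem asymptotic_variance_collapse
    {T U V : Type*} [MeasurableSpace T] [MeasurableSpace U] [MeasurableSpace V]
    (π1 : Measure (T × U × V)) [IsProbabilityMeasure π1]
    (P : Kernel (T × U × V) (T × U × V)) [IsMarkovKernel P]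
    (hPrev : Reversible π1 P) (hPerg : HarrisErgodic π1 P)
    (π2 : Measure (T × V))
    (hπ2 : π2 = π1.map (fun x => (x.1, x.2.2)))
    (M : Kernel (T × V) (T × V)) [IsMarkovKernel M]
    (hMrev : Reversible π2 M)
    (g : T × V → ℝ) (hg : MemLp g 2 π2)
    (hiter : ∀ k : ℕ, 1 ≤ k → ∀ x : T × U × V,
      kIter P k (fun z => g (z.1, z.2.2)) x = kIter M k g (x.1, x.2.2)) :
    ∀ v : ℝ, IsAvar π1 P (fun z => g (z.1, z.2.2)) v ↔ IsAvar π2 M g v :=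
  asymptotic_variance_collapse_general π1 P hPrev π2 hπ2 M hMrev g hg hiter
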